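/- Let κ be a Markov kernel on ℝ^m and c > 0 such that the log-Harnack inequality holds: for every bounded measurable f : ℝ^m → ℝ with f ≥ 1 and all x, x̄ ∈ ℝ^m, ∫ log f(y) κ(x,dy) ≤ log( ∫ f(y) κ(x̄,dy) ) + c |x − x̄|². Then for all probability measures ν, ν̄ on ℝ^m with finite second moments, Ent( νκ | ν̄κ ) ≤ c W₂(ν, ν̄)², where νκ denotes the probability measure (νκ)(A) = ∫ κ(x,A) ν(dx). -/

import Mathlib

open MeasureTheory ProbabilityTheory
open scoped ENNReal NNReal

/-- A bounded measurable real-valued function. -/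
def BddMeasurableFn {E : Type*} [MeasurableSpace E] (f : E → ℝ) : Prop :=
  Measurable f ∧ ∃ C : ℝ, ∀ x, |f x| ≤ C

/-- `π` is a coupling of `μ` and `ν`. -/
def IsCoupling {α β : Type*} [MeasurableSpace α] [MeasurableSpace β]
    (π : Measure (α × β)) (μ : Measure α) (ν : Measure β) : Prop :=
  π.map Prod.fst = μ ∧ π.map Prod.snd = ν

/-- The squared `L²`-Wasserstein distance, as an extended nonnegative real. -/
noncomputable def W2sq {E : Type*} [MeasurableSpace E] [NormedAddCommGroup E]
    (μ ν : Measure E) : ℝ≥0∞ :=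
  ⨅ (π : Measure (E × E)) (_ : IsCoupling π μ ν), ∫⁻ p, (‖p.1 - p.2‖₊ : ℝ≥0∞) ^ 2 ∂π

/-- A probability measure with finite second moment (an element of `P₂`). -/
def MemP2 {E : Type*} [MeasurableSpace E] [NormedAddCommGroup E] (μ : Measure E) : Prop :=
  IsProbabilityMeasure μ ∧ ∫⁻ x, (‖x‖₊ : ℝ≥0∞) ^ 2 ∂μ < ∞

open Classical in
/-- The relative entropy `Ent(ν|μ) = ∫ log (dν/dμ) dν` if `ν ≪ μ` (and `+∞` otherwise). -/
noncomputable def relEnt {E : Type*} [MeasurableSpace E] (ν μ : Measure E) : ℝ≥0∞ :=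
  if ν ≪ μ ∧ Integrable (llr ν μ) ν then ENNReal.ofReal (∫ x, llr ν μ x ∂ν) else ∞

/-!
Fix a coupling `γ` of `ν` and `ν̄`. Integrating the log-Harnack inequality against `γ` and applying
Jensen's inequality to `log` shows that `μ = νκ` and `λ = ν̄κ` satisfy
`∫ log f dμ ≤ log ∫ f dλ + B` for every bounded measurable `f ≥ 1`, with `B = c ∫ |x - y|² dγ`.
Any such bound forces `Ent(μ|λ) ≤ B`. Indicator-type test functions give `μ ≪ λ`; then, with
`t = dμ/dλ` and `f = N · clip_N t` (where `clip_N` clips to `[1/N, N]`), the bound reads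
`∫ (t log (clip_N t) + 1 - t) dλ ≤ B + log (1 + 1/N)`. For `N ≥ 3` the integrand is nonnegative
and it equals `t log t + 1 - t` once `N` is large, so Fatou's lemma gives `Ent(μ|λ) ≤ B`.
Taking the infimum over couplings finishes the proof.
-/

open InformationTheory Filter Topology Real

variable {α β : Type*} [MeasurableSpace α] [MeasurableSpace β]

section BddMeasurableFn

variable {f : α → ℝ}

lemma BddMeasurableFn.integrable (hf : BddMeasurableFn f) (μ : Measure α) [IsFiniteMeasure μ] :
    Integrable f μ :=
  Integrable.of_bound hf.1.aestronglyMeasurable hf.2.choose (ae_of_all _ hf.2.choose_spec)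

lemma bddMeasurableFn_log (hf : Measurable f) {a b : ℝ} (ha : 0 < a)
    (hfa : ∀ x, a ≤ f x) (hfb : ∀ x, f x ≤ b) : BddMeasurableFn fun x => log (f x) := by
  refine ⟨hf.log, max |log a| |log b|, fun x => abs_le.2 ⟨?_, ?_⟩⟩
  · have := log_le_log ha (hfa x)
    linarith [neg_abs_le (log a), le_max_left |log a| |log b|]
  · have := log_le_log (ha.trans_le (hfa x)) (hfb x)
    linarith [le_abs_self (log b), le_max_right |log a| |log b|]

lemma BddMeasurableFn.log (hf : BddMeasurableFn f) (hf1 : ∀ x, 1 ≤ f x) :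
    BddMeasurableFn fun x => log (f x) :=
  let ⟨hm, _, hC⟩ := hf
  bddMeasurableFn_log hm one_pos hf1 fun x => (le_abs_self _).trans (hC x)

lemma BddMeasurableFn.integral_kernel (hf : BddMeasurableFn f) (κ : Kernel β α)
    [IsMarkovKernel κ] : BddMeasurableFn fun x => ∫ y, f y ∂κ x := by
  obtain ⟨hm, C, hC⟩ := hf
  refine ⟨hm.stronglyMeasurable.integral_kernel.measurable, C, fun x => ?_⟩
  simpa using norm_integral_le_of_norm_le_const (μ := κ x) (f := f) (ae_of_all _ hC)

lemma one_le_integral_of_one_le {μ : Measure α} [IsProbabilityMeasure μ] (hf : Integrable f μ)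
    (hf1 : ∀ x, 1 ≤ f x) : 1 ≤ ∫ x, f x ∂μ := by
  simpa using integral_mono (integrable_const 1) hf hf1

lemma integral_log_le_log_integral (hf : BddMeasurableFn f) (hf1 : ∀ x, 1 ≤ f x) (μ : Measure α)
    [IsProbabilityMeasure μ] : ∫ x, log (f x) ∂μ ≤ log (∫ x, f x ∂μ) :=
  (strictConcaveOn_log_Ioi.concaveOn.subset (fun _ hx => one_pos.trans_le hx) (convex_Ici 1)
    ).le_map_integral (continuousOn_log.mono fun _ hx => (one_pos.trans_le hx).ne')
    isClosed_Ici (ae_of_all _ hf1) (hf.integrable μ) ((hf.log hf1).integrable μ)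

end BddMeasurableFn

lemma integral_comp_kernel {μ : Measure α} [SFinite μ] {κ : Kernel α β} [IsSFiniteKernel κ]
    {f : β → ℝ} (hf : Integrable f (κ ∘ₘ μ)) :
    ∫ y, f y ∂(κ ∘ₘ μ) = ∫ x, ∫ y, f y ∂κ x ∂μ := by
  rw [← Measure.integral_compProd ((Measure.integrable_compProd_snd_iff hf.1).2 hf)]
  rw [← Measure.snd_compProd] at hf ⊢
  exact integral_map measurable_snd.aemeasurable hf.1

noncomputable def clip (N s : ℝ) : ℝ := max N⁻¹ (min s N)

lemma measurable_clip (N : ℝ) : Measurable (clip N) :=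
  measurable_const.max (measurable_id.min measurable_const)

lemma inv_le_clip (N s : ℝ) : N⁻¹ ≤ clip N s := le_max_left _ _

lemma clip_le {N : ℝ} (hN : 1 ≤ N) (s : ℝ) : clip N s ≤ N :=
  max_le ((inv_le_one_of_one_le₀ hN).trans hN) (min_le_right _ _)

lemma clip_le_inv_add {N s : ℝ} (hN : 0 ≤ N) (hs : 0 ≤ s) : clip N s ≤ N⁻¹ + s :=
  max_le (le_add_of_nonneg_right hs)
    ((min_le_left _ _).trans (le_add_of_nonneg_left (inv_nonneg.2 hN)))

noncomputable def klFunClip (N s : ℝ) : ℝ := s * log (clip N s) + 1 - s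

lemma measurable_klFunClip (N : ℝ) : Measurable (klFunClip N) :=
  ((measurable_id.mul (measurable_clip N).log).add_const 1).sub measurable_id

lemma klFunClip_nonneg {N s : ℝ} (hN : 3 ≤ N) (hs : 0 ≤ s) : 0 ≤ klFunClip N s := by
  have hN0 : 0 < N := by linarith
  have hlogN : 1 ≤ log N := by
    rw [← log_exp 1]; exact log_le_log (exp_pos 1) (by linarith [exp_one_lt_d9])
  have hNinv : N⁻¹ ≤ N := (inv_le_one_of_one_le₀ (by linarith)).trans (by linarith)
  rw [klFunClip, clip]
  rcases le_total s N⁻¹ with h1 | h1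
  · rw [min_eq_left (h1.trans hNinv), max_eq_left h1, log_inv]
    have hsN : s * N ≤ 1 := (le_div_iff₀ hN0).1 (by rwa [one_div])
    nlinarith [log_le_sub_one_of_pos hN0]
  rcases le_total s N with h2 | h2
  · rw [min_eq_left h2, max_eq_right h1, ← klFun_apply]
    exact klFun_nonneg hs
  · rw [min_eq_right h2, max_eq_right hNinv]
    nlinarith

lemma eventually_klFunClip_eq_klFun {s : ℝ} (hs : 0 ≤ s) :
    ∀ᶠ N : ℕ in atTop, klFunClip N s = klFun s := by
  rcases hs.eq_or_lt with rfl | hs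
  · simp [klFunClip, klFun_zero]
  filter_upwards [tendsto_natCast_atTop_atTop.eventually_ge_atTop (max s s⁻¹)] with N hN
  have hNs : (N : ℝ)⁻¹ ≤ s := inv_le_of_inv_le₀ hs (le_of_max_le_right hN)
  rw [klFunClip, clip, min_eq_left (le_of_max_le_left hN), max_eq_right hNs, klFun_apply]

def LogHarnackBound (μ ν : Measure α) (B : ℝ) : Prop :=
  ∀ f : α → ℝ, BddMeasurableFn f → (∀ y, 1 ≤ f y) →
    ∫ y, log (f y) ∂μ ≤ log (∫ y, f y ∂ν) + B

namespace LogHarnackBound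

variable {μ ν : Measure α} {B : ℝ} [IsProbabilityMeasure μ] [IsProbabilityMeasure ν]

lemma integral_log_le (h : LogHarnackBound μ ν B) {g : α → ℝ} (hg : Measurable g) {a b : ℝ}
    (ha : 0 < a) (hga : ∀ x, a ≤ g x) (hgb : ∀ x, g x ≤ b) :
    ∫ x, log (g x) ∂μ ≤ log (∫ x, g x ∂ν) + B := by
  have hg0 : ∀ x, 0 < g x := fun x => ha.trans_le (hga x)
  have hf1 : ∀ x, 1 ≤ g x / a := fun x => (one_le_div ha).2 (hga x)
  have hf : BddMeasurableFn fun x => g x / a := ⟨hg.div_const a, b / a, fun x => by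
    rw [abs_of_nonneg (zero_le_one.trans (hf1 x))]; gcongr; exact hgb x⟩
  have hν0 : 0 < ∫ x, g x ∂ν := by
    have := one_le_integral_of_one_le (hf.integrable ν) hf1
    rw [integral_div, one_le_div ha] at this
    exact ha.trans_le this
  have hlog : ∀ x, log (g x) = log (g x / a) + log a := fun x => by
    rw [log_div (hg0 x).ne' ha.ne']; ring
  calc ∫ x, log (g x) ∂μ = ∫ x, log (g x / a) ∂μ + log a := by
        simp_rw [hlog]; rw [integral_add ((hf.log hf1).integrable μ) (integrable_const _)]; simp
    _ ≤ log (∫ x, g x / a ∂ν) + B + log a := by gcongr; exact h _ hf hf1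
    _ = log (∫ x, g x ∂ν) + B := by
        rw [integral_div, log_div hν0.ne' ha.ne']; ring

lemma absolutelyContinuous (h : LogHarnackBound μ ν B) : μ ≪ ν := by
  refine Measure.AbsolutelyContinuous.mk fun A hA hνA => ?_
  have hbound : ∀ n : ℕ, n * μ.real A ≤ B := by
    intro n
    have hg : Measurable fun x => exp (A.indicator (fun _ => (n : ℝ)) x) :=
      (measurable_const.indicator hA).exp
    have := h.integral_log_le hg one_pos
      (fun x => one_le_exp (Set.indicator_nonneg (fun _ _ => n.cast_nonneg) x))
      (fun x => exp_le_exp.2 (Set.indicator_le_self' (fun _ _ => n.cast_nonneg) x))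
    have hν1 : ∫ x, exp (A.indicator (fun _ => (n : ℝ)) x) ∂ν = 1 := by
      rw [integral_congr_ae (g := fun _ => 1)]
      · simp
      · filter_upwards [measure_eq_zero_iff_ae_notMem.1 hνA] with x hx
        simp [hx]
    simpa [integral_indicator_const _ hA, hν1, mul_comm] using this
  have hμA : μ.real A ≤ 0 := by
    by_contra! hpos
    obtain ⟨n, hn⟩ := exists_nat_gt (B / μ.real A)
    exact (hbound n).not_gt ((div_lt_iff₀ hpos).1 hn)
  exact (measureReal_eq_zero_iff (measure_ne_top μ A)).1 (hμA.antisymm measureReal_nonneg)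

lemma integral_log_clip_rnDeriv_le (h : LogHarnackBound μ ν B) {N : ℕ} (hN : 0 < N) :
    ∫ x, log (clip N (μ.rnDeriv ν x).toReal) ∂μ ≤ log (1 + (N : ℝ)⁻¹) + B := by
  set c : α → ℝ := fun x => clip N (μ.rnDeriv ν x).toReal
  have hN0 : (0 : ℝ) < (N : ℝ)⁻¹ := by positivity
  have hc : Measurable c := (measurable_clip N).comp (μ.measurable_rnDeriv ν).ennreal_toReal
  have hcN : ∀ x, c x ≤ N := fun x => clip_le (by exact_mod_cast hN) _
  have hcint : Integrable c ν := Integrable.of_bound hc.aestronglyMeasurable N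
    (ae_of_all _ fun x => by rw [norm_of_nonneg (hN0.le.trans (inv_le_clip _ _))]; exact hcN x)
  have hpos : 0 < ∫ x, c x ∂ν := hN0.trans_le <| by
    simpa using integral_mono (integrable_const _) hcint fun x => inv_le_clip _ _
  have hle : ∫ x, c x ∂ν ≤ 1 + (N : ℝ)⁻¹ := by
    calc ∫ x, c x ∂ν ≤ ∫ x, ((N : ℝ)⁻¹ + (μ.rnDeriv ν x).toReal) ∂ν :=
          integral_mono hcint ((integrable_const _).add Measure.integrable_toReal_rnDeriv)
            fun x => clip_le_inv_add N.cast_nonneg ENNReal.toReal_nonneg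
      _ = 1 + (N : ℝ)⁻¹ := by
          rw [integral_add (integrable_const _) Measure.integrable_toReal_rnDeriv,
            Measure.integral_toReal_rnDeriv h.absolutelyContinuous]
          simp [add_comm]
  calc ∫ x, log (c x) ∂μ ≤ log (∫ x, c x ∂ν) + B :=
        h.integral_log_le hc hN0 (fun x => inv_le_clip _ _) hcN
    _ ≤ log (1 + (N : ℝ)⁻¹) + B := by gcongr

lemma klDiv_le (h : LogHarnackBound μ ν B) : klDiv μ ν ≤ ENNReal.ofReal B := by
  have hac := h.absolutelyContinuous
  set t : α → ℝ := fun x => (μ.rnDeriv ν x).toReal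
  have ht : Measurable t := (μ.measurable_rnDeriv ν).ennreal_toReal
  have ht0 : ∀ x, 0 ≤ t x := fun x => ENNReal.toReal_nonneg
  have hclip : ∀ N : ℕ, 3 ≤ N →
      ∫⁻ x, ENNReal.ofReal (klFunClip N (t x)) ∂ν
        ≤ ENNReal.ofReal (log (1 + (N : ℝ)⁻¹) + B) := by
    intro N hN
    have hlog : Integrable (fun x => log (clip N (t x))) μ :=
      (bddMeasurableFn_log ((measurable_clip N).comp ht) (by positivity) (inv_le_clip _ <| t ·)
        (clip_le (by exact_mod_cast (by omega : 1 ≤ N)) <| t ·)).integrable μ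
    have hA : Integrable (fun x => t x • log (clip N (t x))) ν :=
      (integrable_rnDeriv_smul_iff hac).2 hlog
    have hB : Integrable (fun x => 1 - t x) ν :=
      (integrable_const 1).sub Measure.integrable_toReal_rnDeriv
    have hsplit : ∀ x, klFunClip N (t x) = t x • log (clip N (t x)) + (1 - t x) := fun x => by
      rw [klFunClip, smul_eq_mul]; ring
    rw [← ofReal_integral_eq_lintegral_ofReal
      ((hA.add hB).congr (ae_of_all _ fun x => (hsplit x).symm))
      (ae_of_all _ fun x => klFunClip_nonneg (by exact_mod_cast hN) (ht0 x))]
    gcongr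
    calc ∫ x, klFunClip N (t x) ∂ν = ∫ x, log (clip N (t x)) ∂μ := by
          simp_rw [hsplit]
          rw [integral_add hA hB, integral_rnDeriv_smul hac, integral_sub (integrable_const 1)
            Measure.integrable_toReal_rnDeriv, Measure.integral_toReal_rnDeriv hac]
          simp
      _ ≤ log (1 + (N : ℝ)⁻¹) + B := h.integral_log_clip_rnDeriv_le (by omega)
  have hlim : Tendsto (fun N : ℕ => ENNReal.ofReal (log (1 + (N : ℝ)⁻¹) + B)) atTop
      (𝓝 (ENNReal.ofReal B)) := by
    refine ENNReal.tendsto_ofReal ?_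
    simpa using ((tendsto_inv_atTop_zero.comp tendsto_natCast_atTop_atTop).const_add 1).log
      (by norm_num) |>.add_const B
  rw [klDiv_eq_lintegral_klFun_of_ac hac]
  calc ∫⁻ x, ENNReal.ofReal (klFun (t x)) ∂ν
      = ∫⁻ x, liminf (fun N : ℕ => ENNReal.ofReal (klFunClip N (t x))) atTop ∂ν := by
        refine lintegral_congr fun x => (Tendsto.liminf_eq <| tendsto_const_nhds.congr' ?_).symm
        filter_upwards [eventually_klFunClip_eq_klFun (ht0 x)] with N hN
        rw [hN]
    _ ≤ liminf (fun N : ℕ => ∫⁻ x, ENNReal.ofReal (klFunClip N (t x)) ∂ν) atTop :=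
        lintegral_liminf_le fun N => ((measurable_klFunClip N).comp ht).ennreal_ofReal
    _ ≤ liminf (fun N : ℕ => ENNReal.ofReal (log (1 + (N : ℝ)⁻¹) + B)) atTop :=
        liminf_le_liminf (eventually_atTop.2 ⟨3, hclip⟩)
    _ = ENNReal.ofReal B := hlim.liminf_eq

end LogHarnackBound

lemma LogHarnackBound.comp_of_isCoupling {κ : Kernel α β} [IsMarkovKernel κ]
    {ν ν' : Measure α} [IsProbabilityMeasure ν] [IsProbabilityMeasure ν'] {γ : Measure (α × α)}
    (hγ : IsCoupling γ ν ν') {b : α × α → ℝ} (hb : Integrable b γ)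
    (h : ∀ p : α × α, LogHarnackBound (κ p.1) (κ p.2) (b p)) :
    LogHarnackBound (κ ∘ₘ ν) (κ ∘ₘ ν') (∫ p, b p ∂γ) := by
  obtain ⟨rfl, rfl⟩ := hγ
  have := Measure.isProbabilityMeasure_of_map (μ := γ) Prod.fst
  intro f hf hf1
  have hF := hf.integral_kernel κ
  have hF1 : ∀ x, 1 ≤ ∫ y, f y ∂κ x := fun x => one_le_integral_of_one_le (hf.integrable _) hf1
  have hL := (hf.log hf1).integral_kernel κ
  have hlogF : Integrable (fun p : α × α => log (∫ y, f y ∂κ p.2)) γ :=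
    ((hF.log hF1).integrable _).comp_measurable measurable_snd
  calc ∫ y, log (f y) ∂(κ ∘ₘ γ.map Prod.fst)
      = ∫ p, ∫ y, log (f y) ∂κ p.1 ∂γ := by
        rw [integral_comp_kernel ((hf.log hf1).integrable _),
          integral_map measurable_fst.aemeasurable hL.1.aestronglyMeasurable]
    _ ≤ ∫ p, (log (∫ y, f y ∂κ p.2) + b p) ∂γ :=
        integral_mono ((hL.integrable _).comp_measurable measurable_fst) (hlogF.add hb)
          fun p => h p f hf hf1
    _ = ∫ x, log (∫ y, f y ∂κ x) ∂(γ.map Prod.snd) + ∫ p, b p ∂γ := by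
        rw [integral_add hlogF hb,
          integral_map measurable_snd.aemeasurable (hF.log hF1).1.aestronglyMeasurable]
    _ ≤ log (∫ y, f y ∂(κ ∘ₘ γ.map Prod.snd)) + ∫ p, b p ∂γ := by
        rw [integral_comp_kernel (hf.integrable _)]
        gcongr
        exact integral_log_le_log_integral hF hF1 _

lemma relEnt_eq_klDiv {μ ν : Measure α} [IsProbabilityMeasure μ] [IsProbabilityMeasure ν] :
    relEnt μ ν = klDiv μ ν := by
  rw [relEnt]
  split_ifs with h
  · simp [klDiv_of_ac_of_integrable h.1 h.2]
  · exact (klDiv_eq_top_iff.2 fun hac hint => h ⟨hac, hint⟩).symm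

lemma klDiv_comp_le_of_isCoupling {E : Type*} [NormedAddCommGroup E] [MeasurableSpace E]
    [BorelSpace E] [SecondCountableTopology E] {κ : Kernel E E} [IsMarkovKernel κ] {c : ℝ}
    (hc : 0 < c) (h : ∀ x y, LogHarnackBound (κ x) (κ y) (c * ‖x - y‖ ^ 2))
    {ν ν' : Measure E} [IsProbabilityMeasure ν] [IsProbabilityMeasure ν'] {γ : Measure (E × E)}
    (hγ : IsCoupling γ ν ν') :
    klDiv (κ ∘ₘ ν) (κ ∘ₘ ν') ≤ ENNReal.ofReal c * ∫⁻ p, ‖p.1 - p.2‖ₑ ^ 2 ∂γ := by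
  have hsq : ∀ p : E × E, ‖p.1 - p.2‖ₑ ^ 2 = ENNReal.ofReal (‖p.1 - p.2‖ ^ 2) := fun p => by
    rw [ENNReal.ofReal_pow (norm_nonneg _), ofReal_norm]
  rw [lintegral_congr hsq]
  by_cases hcost : ∫⁻ p, ENNReal.ofReal (‖p.1 - p.2‖ ^ 2) ∂γ = ∞
  · rw [hcost, ENNReal.mul_top (ENNReal.ofReal_pos.2 hc).ne']
    exact le_top
  have hint := (lintegral_ofReal_ne_top_iff_integrable (by fun_prop)
    (ae_of_all _ fun p => by positivity)).1 hcost
  rw [← ofReal_integral_eq_lintegral_ofReal hint (ae_of_all _ fun p => by positivity),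
    ← ENNReal.ofReal_mul hc.le, ← integral_const_mul]
  exact (LogHarnackBound.comp_of_isCoupling hγ (hint.const_mul c) fun p => h p.1 p.2).klDiv_le

/-- If a Markov kernel `κ` on `ℝ^m` satisfies the log-Harnack inequality with
constant `c`, then `Ent(νκ | ν̄κ) ≤ c W₂(ν, ν̄)²` for all probability measures `ν, ν̄` with
finite second moments. -/
theorem statement_5 (m : ℕ)
    (κ : Kernel (EuclideanSpace ℝ (Fin m)) (EuclideanSpace ℝ (Fin m))) [IsMarkovKernel κ]
    (c : ℝ) (hc : 0 < c)
    (h : ∀ f : EuclideanSpace ℝ (Fin m) → ℝ, BddMeasurableFn f → (∀ y, 1 ≤ f y) →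
      ∀ x xbar : EuclideanSpace ℝ (Fin m),
        ∫ y, Real.log (f y) ∂(κ x) ≤ Real.log (∫ y, f y ∂(κ xbar)) + c * ‖x - xbar‖ ^ 2) :
    ∀ ν νbar : Measure (EuclideanSpace ℝ (Fin m)), MemP2 ν → MemP2 νbar →
      relEnt (ν.bind fun x => κ x) (νbar.bind fun x => κ x)
        ≤ ENNReal.ofReal c * W2sq ν νbar := by
  intro ν νbar hν hνbar
  have := hν.1
  have := hνbar.1
  have hc' : ENNReal.ofReal c ≠ 0 := (ENNReal.ofReal_pos.2 hc).ne'
  rw [relEnt_eq_klDiv, W2sq, ENNReal.mul_iInf_of_ne hc' ENNReal.ofReal_ne_top]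
  refine le_iInf fun γ => ?_
  rw [ENNReal.mul_iInf_of_ne hc' ENNReal.ofReal_ne_top]
  exact le_iInf fun hγ =>
    klDiv_comp_le_of_isCoupling hc (fun x y f hf hf1 => h f hf hf1 x y) hγ
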